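/- For every integer k ≥ 2, the deck-transformation group of the canonical projection p : L_k^♯ → ℝ is isomorphic to the symmetric group on k letters: Deck(p) ≅ 𝔖_k, the isomorphism sending a permutation σ to the deck transformation h_σ that permutes the origins by σ and fixes all other points. -/

import Mathlib

/-- The gluing relation on `Fin k × ℝ`: `(i,x) ∼ (j,y)` iff `x = y` and
(`x ≠ 0` or `i = j`), i.e. all non-zero points are glued and the origins stay apart. -/
def lineSetoid (k : ℕ) : Setoid (Fin k × ℝ) where
  r p q := p.2 = q.2 ∧ (p.2 ≠ 0 ∨ p.1 = q.1)
  iseqv := by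
    constructor
    · exact fun p => ⟨rfl, Or.inr rfl⟩
    · rintro p q ⟨h1, h2⟩
      refine ⟨h1.symm, ?_⟩
      rcases h2 with h | h
      · exact Or.inl (h1 ▸ h)
      · exact Or.inr h.symm
    · rintro p q r ⟨h1, h2⟩ ⟨h3, h4⟩
      refine ⟨h1.trans h3, ?_⟩
      rcases h2 with h | h
      · exact Or.inl h
      · rcases h4 with h' | h'
        · exact Or.inl (h1.symm ▸ h')
        · exact Or.inr (h.trans h')

/-- The line with `k` (inseparable) origins `L_k^♯`, as a quotient of `Fin k × ℝ`
equipped with the quotient topology. -/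
def LineK (k : ℕ) : Type := Quotient (lineSetoid k)

instance (k : ℕ) : TopologicalSpace (LineK k) :=
  inferInstanceAs (TopologicalSpace (Quotient (lineSetoid k)))

/-- `[x]_i`, the class of the point `x` on the `i`-th copy of `ℝ`. -/
def LineK.mk (k : ℕ) (i : Fin k) (x : ℝ) : LineK k := Quotient.mk (lineSetoid k) (i, x)

/-- The `i`-th origin `o_i = [0]_i`. -/
def LineK.origin (k : ℕ) (i : Fin k) : LineK k := LineK.mk k i 0

/-- The canonical projection `p : L_k^♯ → ℝ`, `[x]_i ↦ x`. -/
def LineK.proj (k : ℕ) : LineK k → ℝ :=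
  Quotient.lift (fun p => p.2) (fun _ _ h => h.1)

/-- The group of self-homeomorphisms of `L_k^♯` under composition. -/
instance (k : ℕ) : Group (LineK k ≃ₜ LineK k) where
  mul f g := g.trans f
  one := Homeomorph.refl _
  inv f := f.symm
  mul_assoc f g h := Homeomorph.ext fun _ => rfl
  one_mul f := Homeomorph.ext fun _ => rfl
  mul_one f := Homeomorph.ext fun _ => rfl
  inv_mul_cancel f := Homeomorph.ext f.symm_apply_apply

/-- The deck-transformation group `Deck(p)` of `p : L_k^♯ → ℝ`: the group of
homeomorphisms `h : L_k^♯ ≃ₜ L_k^♯` with `p ∘ h = p`. -/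
def Deck (k : ℕ) : Subgroup (LineK k ≃ₜ LineK k) where
  carrier := {h | ∀ q, LineK.proj k (h q) = LineK.proj k q}
  one_mem' := fun _ => rfl
  mul_mem' := by
    intro a b ha hb q
    exact (ha (b q)).trans (hb q)
  inv_mem' := by
    intro a ha q
    have h := ha (a.symm q)
    simpa using h.symm

/-!
A deck transformation `h` preserves the fibres of `p`. The fibres over `x ≠ 0` are single points,
so `h` fixes them; the fibre over `0` is the set of origins, so `h` permutes the origins, and `h`
is determined by that permutation. Conversely a permutation `σ` of the copies of `ℝ` respects
the gluing relation and so descends to a deck transformation `h_σ`; `σ ↦ h_σ` is a group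
isomorphism.
-/

namespace LineK

variable {k : ℕ}

theorem eq_of_proj_eq_of_proj_ne_zero {q r : LineK k} (h : proj k q = proj k r)
    (hq : proj k q ≠ 0) : q = r := by
  induction q using Quotient.inductionOn
  induction r using Quotient.inductionOn
  exact Quotient.sound ⟨h, Or.inl hq⟩

theorem origin_injective : Function.Injective (origin k) :=
  fun _ _ h => (Quotient.exact h).2.resolve_left (not_not.mpr rfl)

theorem exists_eq_origin_of_proj_eq_zero {q : LineK k} (hq : proj k q = 0) :
    ∃ i, q = origin k i := by
  induction q using Quotient.inductionOn with
  | h p =>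
    obtain ⟨i, x⟩ := p
    obtain rfl : x = 0 := hq
    exact ⟨i, rfl⟩

/-- The homeomorphism `h_σ : [x]_i ↦ [x]_{σ i}`. -/
def permHomeo (σ : Equiv.Perm (Fin k)) : LineK k ≃ₜ LineK k where
  toFun := Quotient.map' (Prod.map σ id) fun _ _ h => ⟨h.1, h.2.imp_right (congrArg σ)⟩
  invFun := Quotient.map' (Prod.map σ.symm id) fun _ _ h => ⟨h.1, h.2.imp_right (congrArg σ.symm)⟩
  left_inv q := by
    induction q using Quotient.inductionOn with
    | h p => exact congrArg (mk k · p.2) (σ.symm_apply_apply p.1)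
  right_inv q := by
    induction q using Quotient.inductionOn with
    | h p => exact congrArg (mk k · p.2) (σ.apply_symm_apply p.1)
  continuous_toFun := (continuous_of_discreteTopology.prodMap continuous_id).quotient_map' _
  continuous_invFun := (continuous_of_discreteTopology.prodMap continuous_id).quotient_map' _

theorem proj_permHomeo (σ : Equiv.Perm (Fin k)) (q : LineK k) :
    proj k (permHomeo σ q) = proj k q := by
  induction q using Quotient.inductionOn
  rfl

end LineK

namespace Deck

open LineK

variable {k : ℕ}

theorem apply_eq_self_of_proj_ne_zero (h : Deck k) {q : LineK k} (hq : proj k q ≠ 0) :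
    (h : LineK k ≃ₜ LineK k) q = q :=
  eq_of_proj_eq_of_proj_ne_zero (h.2 q) (by rwa [h.2 q])

theorem exists_apply_origin (h : Deck k) (i : Fin k) :
    ∃ j, (h : LineK k ≃ₜ LineK k) (origin k i) = origin k j :=
  exists_eq_origin_of_proj_eq_zero (h.2 _)

def ofPerm (k : ℕ) : Equiv.Perm (Fin k) →* Deck k where
  toFun σ := ⟨permHomeo σ, proj_permHomeo σ⟩
  map_one' := by
    ext q
    induction q using Quotient.inductionOn
    rfl
  map_mul' σ τ := by
    ext q
    induction q using Quotient.inductionOn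
    rfl

theorem ofPerm_injective : Function.Injective (ofPerm k) := by
  intro σ τ hστ
  ext i : 1
  apply origin_injective
  exact congrArg (fun h : Deck k => (h : LineK k ≃ₜ LineK k) (origin k i)) hστ

theorem ext_of_apply_origin {g h : Deck k}
    (H : ∀ i, (g : LineK k ≃ₜ LineK k) (origin k i) = (h : LineK k ≃ₜ LineK k) (origin k i)) :
    g = h := by
  ext q
  by_cases hq : proj k q = 0
  · obtain ⟨i, rfl⟩ := exists_eq_origin_of_proj_eq_zero hq
    exact H i
  · rw [apply_eq_self_of_proj_ne_zero g hq, apply_eq_self_of_proj_ne_zero h hq]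

theorem ofPerm_surjective : Function.Surjective (ofPerm k) := by
  intro h
  choose σ hσ using exists_apply_origin h
  have hσ_inj : Function.Injective σ := fun i j hij =>
    origin_injective <| (h : LineK k ≃ₜ LineK k).injective <| by rw [hσ, hσ, hij]
  refine ⟨Equiv.ofBijective σ hσ_inj.bijective_of_finite, ext_of_apply_origin fun i => ?_⟩
  rw [hσ]
  rfl

end Deck

theorem stmt19_general (k : ℕ) :
    ∃ Φ : Equiv.Perm (Fin k) ≃* Deck k,
      ∀ σ : Equiv.Perm (Fin k),
        (∀ i : Fin k,
          ((Φ σ : LineK k ≃ₜ LineK k)) (LineK.origin k i) = LineK.origin k (σ i)) ∧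
        (∀ q : LineK k, LineK.proj k q ≠ 0 → ((Φ σ : LineK k ≃ₜ LineK k)) q = q) :=
  ⟨MulEquiv.ofBijective (Deck.ofPerm k) ⟨Deck.ofPerm_injective, Deck.ofPerm_surjective⟩,
    fun _ => ⟨fun _ => rfl, fun _ hq => Deck.apply_eq_self_of_proj_ne_zero _ hq⟩⟩

/-- For every integer `k ≥ 2`, the deck-transformation group of
`p : L_k^♯ → ℝ` is isomorphic to the symmetric group `𝔖_k`, the isomorphism
sending a permutation `σ` to the deck transformation `h_σ` that permutes the
origins by `σ` and fixes all other points. -/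
theorem stmt19 (k : ℕ) (hk : 2 ≤ k) :
    ∃ Φ : Equiv.Perm (Fin k) ≃* Deck k,
      ∀ σ : Equiv.Perm (Fin k),
        (∀ i : Fin k,
          ((Φ σ : LineK k ≃ₜ LineK k)) (LineK.origin k i) = LineK.origin k (σ i)) ∧
        (∀ q : LineK k, LineK.proj k q ≠ 0 → ((Φ σ : LineK k ≃ₜ LineK k)) q = q) :=
  stmt19_general k
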